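/- arXiv:1106.2204 — 2 statements merged into one kernel-verified Lean document; each statement's English description precedes it below -/
import Mathlib

section
/- Let L be a complete lattice such that L is order-isomorphic to QTh(T₀) for some first-order language and some set T₀ of quasi-identities. Then there exist a join semilattice S with least element 0 and a monoid M of operators on S such that L is order-isomorphic to Con(S,∨,0,M), and moreover there exists an element k ∈ S such that for every s ∈ S and every f ∈ M there exist finitely many g_1, …, g_n ∈ M with f(s) ∨ g_1(k) ∨ ⋯ ∨ g_n(k) = s ∨ g_1(k) ∨ ⋯ ∨ g_n(k). -/
open FirstOrder FirstOrder.Language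

universe u v w

/-- A quasi-identity whose matrix has `n` universally quantified variables. -/
def IsQuasiIdentityN {L : FirstOrder.Language.{u, v}} (n : ℕ) (σ : L.Sentence) : Prop :=
  ∃ (hyps : List (L.BoundedFormula Empty n)) (concl : L.BoundedFormula Empty n),
    (∀ φ ∈ hyps, φ.IsAtomic) ∧ concl.IsAtomic ∧
      σ = BoundedFormula.alls ((hyps.foldr (· ⊓ ·) ⊤).imp concl)

/-- A quasi-identity: the universal closure of an implication whose premise is a
finite (possibly empty) conjunction of atomic formulas and whose conclusion is an
atomic formula. -/
def IsQuasiIdentity {L : FirstOrder.Language.{u, v}} (σ : L.Sentence) : Prop :=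
  ∃ n, IsQuasiIdentityN n σ

/-- A quasi-equational theory extending `T₀`: a set `T` of quasi-identities
containing `T₀` such that every quasi-identity true in all models of `T` belongs
to `T`. -/
def IsQETheory {L : FirstOrder.Language.{u, v}} (T₀ T : L.Theory) : Prop :=
  T₀ ⊆ T ∧ (∀ σ ∈ T, IsQuasiIdentity σ) ∧
    ∀ σ : L.Sentence, IsQuasiIdentity σ → T ⊨ᵇ σ → σ ∈ T

/-- An operator on a join semilattice with least element 0: a map preserving
binary joins and 0. -/
def IsOperator {S : Type u} [SemilatticeSup S] [OrderBot S] (f : S → S) : Prop :=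
  (∀ x y : S, f (x ⊔ y) = f x ⊔ f y) ∧ f ⊥ = ⊥

/-- A congruence of `(S,∨,0,M)`: an equivalence relation compatible with joins
and with every operator in `M`. -/
def IsCong {S : Type u} [SemilatticeSup S] (M : Set (S → S)) (θ : S → S → Prop) : Prop :=
  Equivalence θ ∧ (∀ x y s : S, θ x y → θ (x ⊔ s) (y ⊔ s)) ∧
    (∀ f ∈ M, ∀ x y : S, θ x y → θ (f x) (f y))

/-- A representation of the lattice `L'` as the congruence lattice of a join
semilattice `S` with `0` and a monoid `M` of operators, together with a
pseudo-one element `k ∈ S`: for every `s ∈ S` and every `f ∈ M` there are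
finitely many `g₁, …, gₙ ∈ M` with
`f(s) ∨ g₁(k) ∨ ⋯ ∨ gₙ(k) = s ∨ g₁(k) ∨ ⋯ ∨ gₙ(k)`. -/
structure PseudoOneRepresentation (L' : Type w) [CompleteLattice L'] :
    Type (max w (max u v) + 1) where
  S : Type (max u v)
  [sl : SemilatticeSup S]
  [bo : OrderBot S]
  M : Set (S → S)
  op : ∀ f ∈ M, IsOperator f
  idMem : id ∈ M
  compMem : ∀ f ∈ M, ∀ g ∈ M, f ∘ g ∈ M
  iso : L' ≃o {θ : S → S → Prop // IsCong M θ}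
  k : S
  pseudoOne : ∀ s : S, ∀ f ∈ M, ∃ gs : List (S → S), gs ≠ [] ∧ (∀ g ∈ gs, g ∈ M) ∧
    f s ⊔ (gs.map fun g => g k).foldr (· ⊔ ·) ⊥ =
      s ⊔ (gs.map fun g => g k).foldr (· ⊔ ·) ⊥


/-!
Take for `S` the finite conjunctions of atomic formulas in countably many variables, modulo
equivalence in all models of `T₀`, ordered by reverse entailment, so that `∨` is conjunction;
take for `M` the operators induced by substitutions of terms for variables. A quasi-equational
theory `T ⊇ T₀` gives the congruence "equivalent modulo `T`", and a congruence `θ` gives the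
quasi-identities `⋀Φ → ψ` with `Φ θ (Φ ∧ ψ)`. These maps are mutually inverse: a term model
built from `θ` shows that the theory of `θ` induces no more than `θ`, and writing a conjunction
and an atom in finitely many variables turns every `Φ θ (Φ ∧ ψ)` into a quasi-identity of the
theory. The pseudo-one is `k = (v₀ ≈ v₁)`: for a substitution `g` and a conjunction `s`, the
instances `vₐ ≈ g(vₐ)` of `k`, for the variables `vₐ` of `s`, make `g(s)` equivalent to `s`.
-/

namespace IsCong

variable {S : Type*} [SemilatticeSup S] {M : Set (S → S)} {θ : S → S → Prop} {x y a b : S}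

theorem refl (hθ : IsCong M θ) (x : S) : θ x x := hθ.1.refl x

theorem symm (hθ : IsCong M θ) (h : θ x y) : θ y x := hθ.1.symm h

theorem trans (hθ : IsCong M θ) {z : S} (h₁ : θ x y) (h₂ : θ y z) : θ x z :=
  hθ.1.trans h₁ h₂

theorem sup_right (hθ : IsCong M θ) (h : θ x y) (s : S) : θ (x ⊔ s) (y ⊔ s) :=
  hθ.2.1 x y s h

theorem sup_left (hθ : IsCong M θ) (h : θ x y) (s : S) : θ (s ⊔ x) (s ⊔ y) := by
  simpa only [sup_comm s] using hθ.sup_right h s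

theorem apply (hθ : IsCong M θ) {f : S → S} (hf : f ∈ M) (h : θ x y) : θ (f x) (f y) :=
  hθ.2.2 f hf x y h

theorem sup_of_le (hθ : IsCong M θ) (h : y ≤ x) : θ x (x ⊔ y) := by
  rw [sup_eq_left.2 h]
  exact hθ.refl x

theorem sup_of_le_sup (hθ : IsCong M θ) (ha : θ x (x ⊔ a)) (hb : b ≤ x ⊔ a) :
    θ x (x ⊔ b) := by
  have h := hθ.sup_right ha b
  rw [sup_eq_left.2 hb] at h
  exact hθ.trans ha (hθ.symm h)

theorem sup_sup (hθ : IsCong M θ) (ha : θ x (x ⊔ a)) (hb : θ x (x ⊔ b)) :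
    θ x (x ⊔ (a ⊔ b)) := by
  have h := hθ.sup_right hb a
  rw [sup_right_comm, sup_assoc] at h
  exact hθ.trans ha h

theorem sup_trans (hθ : IsCong M θ) (ha : θ x (x ⊔ a)) (hab : θ a (a ⊔ b)) : θ x (x ⊔ b) :=
  hθ.sup_of_le_sup (hθ.trans ha (hθ.sup_left hab x)) (le_sup_right.trans le_sup_right)

theorem sup_of_rel (hθ : IsCong M θ) (h : θ x y) (hb : b ≤ y) : θ x (x ⊔ b) := by
  have h' := hθ.sup_left h x
  rw [sup_idem] at h'
  exact hθ.sup_of_le_sup h' (le_sup_of_le_right hb)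

theorem of_sup_of_sup (hθ : IsCong M θ) (h₁ : θ x (x ⊔ y)) (h₂ : θ y (y ⊔ x)) : θ x y := by
  rw [sup_comm] at h₂
  exact hθ.trans h₁ (hθ.symm h₂)

theorem sup_foldr [OrderBot S] (hθ : IsCong M θ) {ys : List S}
    (h : ∀ y ∈ ys, θ x (x ⊔ y)) : θ x (x ⊔ ys.foldr (· ⊔ ·) ⊥) := by
  induction ys with
  | nil => exact hθ.sup_of_le bot_le
  | cons y ys ih =>
    exact hθ.sup_sup (h y List.mem_cons_self) (ih fun z hz => h z (List.mem_cons_of_mem y hz))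

end IsCong

namespace QuasiEquational

open BoundedFormula

variable {L : FirstOrder.Language.{u, v}}

/-- Variables live in `Type v`, so that the term model over them lives in `Type (max u v)`,
the universe of the models that `⊨ᵇ` quantifies over. -/
abbrev Var : Type v := ULift.{v} ℕ

abbrev Atom (L : FirstOrder.Language.{u, v}) : Type (max u v) :=
  {φ : L.Formula Var.{v} // φ.IsAtomic}

section Semantics

variable {M : Type*} [L.Structure M]

def Sat (w : Var → M) (F : List (Atom L)) : Prop := ∀ φ ∈ F, φ.1.Realize w

theorem sat_append {w : Var → M} {F G : List (Atom L)} :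
    Sat w (F ++ G) ↔ Sat w F ∧ Sat w G :=
  List.forall_mem_append

theorem sat_cons {w : Var → M} {φ : Atom L} {F : List (Atom L)} :
    Sat w (φ :: F) ↔ φ.1.Realize w ∧ Sat w F :=
  List.forall_mem_cons

theorem sat_nil (w : Var → M) : Sat w ([] : List (Atom L)) := fun _ h => absurd h List.not_mem_nil

theorem sat_singleton {w : Var → M} {φ : Atom L} : Sat w [φ] ↔ φ.1.Realize w := by
  simp [Sat]

theorem sat_ofFn {w : Var → M} {n : ℕ} {f : Fin n → Atom L} :
    Sat w (List.ofFn f) ↔ ∀ i, (f i).1.Realize w :=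
  List.forall_mem_ofFn_iff

theorem realize_congr_of_eqOn {α : Type*} [DecidableEq α] {n : ℕ} {φ : L.BoundedFormula α n}
    {w w' : α → M} {xs : Fin n → M} (h : ∀ a ∈ φ.freeVarFinset, w a = w' a) :
    φ.Realize w xs ↔ φ.Realize w' xs :=
  (realize_restrictFreeVar (f := id) (v := fun a => w a) w fun _ => rfl).symm.trans
    (realize_restrictFreeVar w' fun a => h a a.2)

noncomputable def vars (F : List (Atom L)) : List Var :=
  F.flatMap fun φ => φ.1.freeVarFinset.toList

theorem mem_vars {F : List (Atom L)} {a : Var} :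
    a ∈ vars F ↔ ∃ φ ∈ F, a ∈ φ.1.freeVarFinset := by
  simp [vars]

theorem sat_congr_of_eqOn {F : List (Atom L)} {w w' : Var → M}
    (h : ∀ a ∈ vars F, w a = w' a) : Sat w F ↔ Sat w' F :=
  forall₂_congr fun φ hφ => realize_congr_of_eqOn fun a ha => h a (mem_vars.2 ⟨φ, hφ, ha⟩)

def Atom.subst (g : Var → L.Term Var) (φ : Atom L) : Atom L :=
  ⟨φ.1.subst g, φ.2.recOn (fun _ _ => .equal _ _) fun _ _ => .rel _ _⟩

theorem sat_map_subst {g : Var → L.Term Var} {w : Var → M} {F : List (Atom L)} :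
    Sat w (F.map (Atom.subst g)) ↔ Sat (fun a => (g a).realize w) F := by
  simp only [Sat, List.forall_mem_map]
  exact forall₂_congr fun φ _ => realize_subst

def eqAtom (t₁ t₂ : L.Term (Var ⊕ Fin 0)) : Atom L :=
  ⟨t₁.bdEqual t₂, .equal t₁ t₂⟩

theorem realize_eqAtom {t₁ t₂ : L.Term (Var ⊕ Fin 0)} {w : Var → M} :
    (eqAtom t₁ t₂).1.Realize w ↔
      t₁.realize (Sum.elim w default) = t₂.realize (Sum.elim w default) :=
  realize_bdEqual t₁ t₂

def relAtom {l : ℕ} (R : L.Relations l) (ts : Fin l → L.Term (Var ⊕ Fin 0)) : Atom L :=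
  ⟨R.boundedFormula ts, .rel R ts⟩

theorem realize_relAtom {l : ℕ} {R : L.Relations l} {ts : Fin l → L.Term (Var ⊕ Fin 0)}
    {w : Var → M} :
    (relAtom R ts).1.Realize w ↔
      Structure.RelMap R fun i => (ts i).realize (Sum.elim w default) :=
  realize_rel

end Semantics

def Entails (T : L.Theory) (F G : List (Atom L)) : Prop :=
  ∀ (M : Theory.ModelType.{u, v, max u v} T) (w : Var → M), Sat w F → Sat w G

variable (T : L.Theory)

def Conj.setoid : Setoid (List (Atom L)) where
  r F G := ∀ (M : Theory.ModelType.{u, v, max u v} T) (w : Var → M), Sat w F ↔ Sat w G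
  iseqv := ⟨fun _ _ _ => Iff.rfl, fun h M w => (h M w).symm,
    fun h₁ h₂ M w => (h₁ M w).trans (h₂ M w)⟩

def Conj : Type (max u v) := Quotient (Conj.setoid T)

namespace Conj

variable {T} {F G : List (Atom L)}

def mk (F : List (Atom L)) : Conj T := Quotient.mk _ F

theorem mk_eq_mk : (mk F : Conj T) = mk G ↔
    ∀ (M : Theory.ModelType.{u, v, max u v} T) (w : Var → M), Sat w F ↔ Sat w G :=
  Quotient.eq

theorem mk_eq_mk_of_forall
    (h : ∀ (M : Type (max u v)) [L.Structure M] (w : Var → M), Sat w F ↔ Sat w G) :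
    (mk F : Conj T) = mk G :=
  mk_eq_mk.2 fun M w => h M w

instance : Max (Conj T) :=
  ⟨Quotient.map₂ (· ++ ·) fun _ _ hF _ _ hG M w => by
    simp only [sat_append, hF M w, hG M w]⟩

theorem mk_append (F G : List (Atom L)) : (mk (F ++ G) : Conj T) = mk F ⊔ mk G := rfl

instance : SemilatticeSup (Conj T) := SemilatticeSup.mk'
  (fun x y => Quotient.inductionOn₂ x y fun _ _ =>
    mk_eq_mk_of_forall fun _ _ _ => by simp only [sat_append, and_comm])
  (fun x y z => Quotient.inductionOn₃ x y z fun F G H => congrArg mk (List.append_assoc F G H))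
  (fun x => Quotient.inductionOn x fun _ =>
    mk_eq_mk_of_forall fun _ _ _ => by simp only [sat_append, and_self])

instance : OrderBot (Conj T) where
  bot := mk []
  bot_le x := Quotient.inductionOn x fun _ => rfl

theorem mk_le_mk : (mk F : Conj T) ≤ mk G ↔ Entails T G F :=
  mk_eq_mk.trans <| forall₂_congr fun _ _ => by simp only [sat_append, and_iff_right_iff_imp]

theorem mk_eq_foldr (G : List (Atom L)) :
    (mk G : Conj T) = (G.map fun c => mk [c]).foldr (· ⊔ ·) ⊥ := by
  induction G with
  | nil => rfl
  | cons c G ih => exact (congrArg (mk [c] ⊔ ·) ih :)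

def map {T' : L.Theory} (h : T ⊆ T') : Conj T → Conj T' :=
  Quotient.map id fun _ _ hFG M w => hFG (M.subtheoryModel h) w

def subst (g : Var → L.Term Var) : Conj T → Conj T :=
  Quotient.map (List.map (Atom.subst g)) fun _ _ h M w => by
    simp only [sat_map_subst, h M (fun a => (g a).realize w)]

theorem subst_mk (g : Var → L.Term Var) (F : List (Atom L)) :
    (subst g (mk F) : Conj T) = mk (F.map (Atom.subst g)) := rfl

theorem subst_var : (subst Term.var : Conj T → Conj T) = id :=
  funext fun x => Quotient.inductionOn x fun _ =>
    mk_eq_mk_of_forall fun _ _ _ => sat_map_subst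

theorem subst_comp (g g' : Var → L.Term Var) :
    (subst g ∘ subst g' : Conj T → Conj T) = subst fun a => (g' a).subst g :=
  funext fun x => Quotient.inductionOn x fun _ => mk_eq_mk_of_forall fun _ _ _ => by
    simp only [List.map_map]
    rw [← List.map_map, sat_map_subst, sat_map_subst, sat_map_subst]
    simp only [Term.realize_subst]

theorem isOperator_subst (g : Var → L.Term Var) : IsOperator (subst g : Conj T → Conj T) :=
  ⟨fun x y => Quotient.inductionOn₂ x y fun _ _ => congrArg mk (List.map_append ..), rfl⟩

end Conj

open Conj

def substOps : Set (Conj T → Conj T) := Set.range Conj.subst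

variable {T}

theorem id_mem_substOps : id ∈ substOps T := ⟨Term.var, subst_var⟩

theorem comp_mem_substOps {f f' : Conj T → Conj T} (hf : f ∈ substOps T)
    (hf' : f' ∈ substOps T) : f ∘ f' ∈ substOps T := by
  obtain ⟨g, rfl⟩ := hf
  obtain ⟨g', rfl⟩ := hf'
  exact ⟨_, (subst_comp g g').symm⟩

theorem isOperator_of_mem_substOps {f : Conj T → Conj T} (hf : f ∈ substOps T) :
    IsOperator f := by
  obtain ⟨g, rfl⟩ := hf
  exact isOperator_subst g

structure QuasiIdentity (L : FirstOrder.Language.{u, v}) where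
  n : ℕ
  hyps : List (L.BoundedFormula Empty n)
  concl : L.BoundedFormula Empty n
  hyps_isAtomic : ∀ φ ∈ hyps, φ.IsAtomic
  concl_isAtomic : concl.IsAtomic

def QuasiIdentity.toSentence (q : QuasiIdentity L) : L.Sentence :=
  alls ((q.hyps.foldr (· ⊓ ·) ⊤).imp q.concl)

theorem isQuasiIdentity_iff {σ : L.Sentence} :
    IsQuasiIdentity σ ↔ ∃ q : QuasiIdentity L, q.toSentence = σ :=
  ⟨fun ⟨n, hyps, concl, hh, hc, h⟩ => ⟨⟨n, hyps, concl, hh, hc⟩, h.symm⟩,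
    fun ⟨q, h⟩ => ⟨q.n, q.hyps, q.concl, q.hyps_isAtomic, q.concl_isAtomic, h.symm⟩⟩

namespace QuasiIdentity

def encode {n : ℕ} (φ : L.BoundedFormula Empty n) (hφ : φ.IsAtomic) : Atom L :=
  ⟨φ.toFormula.relabel (Sum.elim Empty.elim fun i : Fin n => (⟨i⟩ : Var)),
    IsAtomic.relabel (by cases hφ <;> constructor) _⟩

def premise (q : QuasiIdentity L) : List (Atom L) := q.hyps.pmap encode q.hyps_isAtomic

def conclusion (q : QuasiIdentity L) : Atom L := encode q.concl q.concl_isAtomic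

variable {M : Type*} [L.Structure M]

theorem realize_encode {n : ℕ} {φ : L.BoundedFormula Empty n} {hφ : φ.IsAtomic}
    {w : Var → M} : (encode φ hφ).1.Realize w ↔ φ.Realize Empty.elim fun i => w ⟨i⟩ := by
  rw [encode, Formula.realize_relabel, realize_toFormula]
  exact iff_of_eq (congrArg₂ φ.Realize (Subsingleton.elim _ _) rfl)

theorem sat_premise {q : QuasiIdentity L} {w : Var → M} :
    Sat w q.premise ↔ ∀ φ ∈ q.hyps, φ.Realize Empty.elim fun i => w ⟨i⟩ := by
  simp only [Sat, premise, List.mem_pmap, forall_exists_index]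
  constructor
  · exact fun h φ hφ => realize_encode.1 (h _ φ hφ rfl)
  · rintro h _ φ hφ rfl
    exact realize_encode.2 (h φ hφ)

theorem realize_toSentence_iff [Nonempty M] (q : QuasiIdentity L) :
    M ⊨ q.toSentence ↔ ∀ w : Var → M, Sat w q.premise → q.conclusion.1.Realize w := by
  simp only [Sentence.Realize, toSentence, realize_alls, realize_imp, realize_foldr_inf,
    sat_premise, conclusion, realize_encode]
  have hv : (default : Empty → M) = Empty.elim := Subsingleton.elim _ _
  constructor
  · intro h w
    simpa only [hv] using h fun i => w ⟨i⟩
  · intro h xs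
    let w : Var → M := fun a =>
      if ha : a.down < q.n then xs ⟨a.down, ha⟩ else Classical.arbitrary M
    have hw : (fun i : Fin q.n => w ⟨i⟩) = xs := funext fun i => dif_pos i.2
    simpa only [hv, hw] using h w

theorem models_toSentence_iff {T : L.Theory} (q : QuasiIdentity L) :
    T ⊨ᵇ q.toSentence ↔ Entails T q.premise [q.conclusion] := by
  simp only [Theory.models_sentence_iff, realize_toSentence_iff, Entails, sat_singleton]

def decode (n : ℕ) (φ : L.Formula Var) : L.BoundedFormula Empty (n + 1) :=
  BoundedFormula.relabel (fun a : Var => Sum.inr (Fin.ofNat (n + 1) a.down)) φ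

theorem realize_decode {n : ℕ} {φ : L.Formula Var} {xs : Fin (n + 1) → M} :
    (decode n φ).Realize Empty.elim xs ↔ φ.Realize fun a => xs (Fin.ofNat (n + 1) a.down) := by
  rw [decode, realize_relabel]
  exact iff_of_eq (congrArg₂ (BoundedFormula.Realize φ) rfl (Subsingleton.elim _ _))

theorem exists_premise_conclusion_equiv (F : List (Atom L)) (c : Atom L) :
    ∃ q : QuasiIdentity L, ∀ {M : Type (max u v)} [L.Structure M] (w : Var → M),
      (Sat w q.premise ↔ Sat w F) ∧ (q.conclusion.1.Realize w ↔ c.1.Realize w) := by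
  obtain ⟨n, hn⟩ : ∃ n, ∀ a ∈ vars (c :: F), a.down < n + 1 :=
    ⟨((vars (c :: F)).map ULift.down).sum,
      fun a ha => Nat.lt_succ_of_le (List.le_sum_of_mem (List.mem_map_of_mem ha))⟩
  refine ⟨⟨n + 1, F.map (decode n ·.1), decode n c.1, ?_, c.2.relabel _⟩, fun w => ?_⟩
  · simp only [List.mem_map]
    rintro _ ⟨φ, -, rfl⟩
    exact φ.2.relabel _
  have hw : ∀ φ ∈ c :: F,
      (φ.1.Realize fun a => w ⟨(Fin.ofNat (n + 1) a.down : ℕ)⟩) ↔ φ.1.Realize w :=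
    fun φ hφ => realize_congr_of_eqOn fun a ha => by
      rw [Fin.val_ofNat, Nat.mod_eq_of_lt (hn a (mem_vars.2 ⟨φ, hφ, ha⟩))]
  simp only [sat_premise, conclusion, realize_encode, List.forall_mem_map, realize_decode]
  exact ⟨forall₂_congr fun φ hφ => hw φ (List.mem_cons_of_mem c hφ), hw c List.mem_cons_self⟩

end QuasiIdentity

variable {T₀ T : L.Theory}

def theoryCong (h : T₀ ⊆ T) (x y : Conj T₀) : Prop := Conj.map h x = Conj.map h y

theorem isCong_theoryCong (h : T₀ ⊆ T) : IsCong (substOps T₀) (theoryCong h) := by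
  refine ⟨⟨fun _ => rfl, Eq.symm, Eq.trans⟩, fun x y s hxy => ?_, ?_⟩
  · induction x using Quotient.ind; induction y using Quotient.ind; induction s using Quotient.ind
    exact (congrArg (· ⊔ Conj.mk _) hxy :)
  · rintro _ ⟨g, rfl⟩ x y hxy
    induction x using Quotient.ind; induction y using Quotient.ind
    exact (congrArg (subst g) hxy :)

theorem theoryCong_mk_sup_iff (h : T₀ ⊆ T) {F G : List (Atom L)} :
    theoryCong h (mk F) (mk F ⊔ mk G) ↔ Entails T F G :=
  left_eq_sup.trans mk_le_mk

theorem theoryCong_mono {T' : L.Theory} (h : T₀ ⊆ T) (h' : T₀ ⊆ T') (hT : T ⊆ T')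
    {x y : Conj T₀} (hxy : theoryCong h x y) : theoryCong h' x y := by
  induction x using Quotient.ind; induction y using Quotient.ind
  exact congrArg (Conj.map hT) hxy

def congTheory (θ : Conj T₀ → Conj T₀ → Prop) : L.Theory :=
  {σ | ∃ q : QuasiIdentity L, q.toSentence = σ ∧
    θ (Conj.mk q.premise) (Conj.mk q.premise ⊔ Conj.mk [q.conclusion])}

variable {O : Set (Conj T₀ → Conj T₀)} {θ : Conj T₀ → Conj T₀ → Prop}

theorem subset_congTheory (hT₀ : ∀ σ ∈ T₀, IsQuasiIdentity σ) (hθ : IsCong O θ) :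
    T₀ ⊆ congTheory θ := by
  intro σ hσ
  obtain ⟨q, rfl⟩ := isQuasiIdentity_iff.1 (hT₀ σ hσ)
  exact ⟨q, rfl, hθ.sup_of_le
    (mk_le_mk.2 (q.models_toSentence_iff.1 (Theory.models_sentence_of_mem hσ)))⟩

theorem congTheory_theoryCong (hT : IsQETheory T₀ T) : congTheory (theoryCong hT.1) = T := by
  ext σ
  constructor
  · rintro ⟨q, rfl, hq⟩
    exact hT.2.2 _ (isQuasiIdentity_iff.2 ⟨q, rfl⟩)
      (q.models_toSentence_iff.2 ((theoryCong_mk_sup_iff hT.1).1 hq))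
  · intro hσ
    obtain ⟨q, rfl⟩ := isQuasiIdentity_iff.1 (hT.2.1 σ hσ)
    exact ⟨q, rfl, (theoryCong_mk_sup_iff hT.1).2
      (q.models_toSentence_iff.1 (Theory.models_sentence_of_mem hσ))⟩

theorem sup_mk_of_forall (hθ : IsCong O θ) {H G : List (Atom L)}
    (h : ∀ c ∈ G, θ (mk H) (mk H ⊔ mk [c])) : θ (mk H) (mk H ⊔ mk G) := by
  rw [mk_eq_foldr G]
  exact hθ.sup_foldr (List.forall_mem_map.2 h)

theorem sup_mk_singleton_of_entails (hθ : IsCong O θ) {H G : List (Atom L)} {φ : Atom L}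
    (hG : ∀ c ∈ G, θ (mk H) (mk H ⊔ mk [c])) (hφ : Entails T₀ (H ++ G) [φ]) :
    θ (mk H) (mk H ⊔ mk [φ]) :=
  hθ.sup_of_le_sup (sup_mk_of_forall hθ hG) (mk_le_mk.2 hφ)

section TermModel

variable (hθ : IsCong O θ) (H : List (Atom L))

def termSetoid : Setoid (L.Term (Var ⊕ Fin 0)) where
  r t u := θ (mk H) (mk H ⊔ mk [eqAtom t u])
  iseqv := by
    refine ⟨fun t => ?_, fun {t u} h => ?_, fun {t u r} h₁ h₂ => ?_⟩
    · exact sup_mk_singleton_of_entails hθ (G := []) (fun _ h => absurd h List.not_mem_nil)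
        fun _ _ _ => by
        simp [sat_singleton, realize_eqAtom]
    · exact sup_mk_singleton_of_entails hθ (G := [eqAtom t u]) (by simpa using h) fun _ _ hw => by
        simp_all [sat_append, sat_singleton, realize_eqAtom]
    · exact sup_mk_singleton_of_entails hθ (G := [eqAtom t u, eqAtom u r]) (by simp [h₁, h₂])
        fun _ _ hw => by simp_all [sat_append, sat_cons, realize_eqAtom]

variable (θ) in
abbrev termStructure : L.Structure (L.Term (Var ⊕ Fin 0)) where
  funMap f ts := Term.func f ts
  RelMap R ts := θ (mk H) (mk H ⊔ mk [relAtom R ts])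

theorem realize_termStructure (t : L.Term (Var ⊕ Fin 0)) :
    @Term.realize L _ (termStructure θ H) _ Term.var t = t := by
  induction t with
  | var => rfl
  | func f ts ih => exact congrArg (Term.func f) (funext ih)

theorem relMap_termStructure_of_rel {l : ℕ} {R : L.Relations l} {x y : Fin l → L.Term (Var ⊕ Fin 0)}
    (hxy : ∀ i, termSetoid hθ H (x i) (y i)) (hx : (termStructure θ H).RelMap R x) :
    (termStructure θ H).RelMap R y :=
  sup_mk_singleton_of_entails hθ (G := relAtom R x :: List.ofFn fun i => eqAtom (x i) (y i))
    (by simpa [List.forall_mem_ofFn_iff] using ⟨hx, hxy⟩) fun _ w hw => by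
      simp only [sat_append, sat_cons, sat_ofFn, sat_nil, and_true, realize_eqAtom,
        realize_relAtom] at hw ⊢
      rw [← funext hw.2.2]
      exact hw.2.1

instance termPrestructure : L.Prestructure (termSetoid hθ H) where
  toStructure := termStructure θ H
  fun_equiv {_ f} x y hxy :=
    sup_mk_singleton_of_entails hθ (G := List.ofFn fun i => eqAtom (x i) (y i))
      (List.forall_mem_ofFn_iff.2 fun i => hxy i) fun _ w hw => by
        simp only [sat_append, sat_ofFn, sat_singleton, realize_eqAtom] at hw ⊢
        exact congrArg (Structure.funMap f) (funext hw.2)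
  rel_equiv x y hxy := propext ⟨relMap_termStructure_of_rel hθ H hxy,
    relMap_termStructure_of_rel hθ H fun i => (termSetoid hθ H).symm (hxy i)⟩

abbrev TermModel : Type (max u v) := Quotient (termSetoid hθ H)

def termVal : Var → TermModel hθ H := fun a => ⟦Term.var (Sum.inl a)⟧

instance : Nonempty (TermModel hθ H) := ⟨termVal hθ H ⟨0⟩⟩

theorem realize_termVal_term (t : L.Term (Var ⊕ Fin 0)) :
    t.realize (Sum.elim (termVal hθ H) default) = ⟦t⟧ := by
  have : Sum.elim (termVal hθ H) default = fun b => ⟦Term.var b⟧ := by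
    funext b
    rcases b with a | i
    · rfl
    · exact i.elim0
  rw [this, Term.realize_quotient_mk', realize_termStructure]

theorem realize_termVal (φ : Atom L) :
    φ.1.Realize (termVal hθ H) ↔ θ (mk H) (mk H ⊔ mk [φ]) := by
  obtain ⟨_, hφ⟩ := φ
  cases hφ with
  | equal t₁ t₂ =>
    refine (realize_eqAtom (t₁ := t₁) (t₂ := t₂)).trans ?_
    rw [realize_termVal_term, realize_termVal_term]
    exact Quotient.eq
  | rel R ts =>
    refine (realize_relAtom (R := R) (ts := ts)).trans ?_
    simp only [realize_termVal_term]
    exact relMap_quotient_mk' _ R ts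

theorem exists_realize_termVal_eq (w : Var → TermModel hθ H) :
    ∃ g : Var → L.Term Var, ∀ a, (g a).realize (termVal hθ H) = w a := by
  refine ⟨fun a => (w a).out.relabel (Sum.elim id finZeroElim), fun a => ?_⟩
  calc _ = (w a).out.realize (Sum.elim (termVal hθ H) default) := by
        rw [Term.realize_relabel]
        congr 1
        funext b
        rcases b with a | i
        · rfl
        · exact i.elim0
    _ = w a := (realize_termVal_term hθ H _).trans (Quotient.out_eq _)

theorem termModel_models (hO : substOps T₀ ⊆ O) : TermModel hθ H ⊨ congTheory θ := by
  refine (Theory.model_iff _).2 ?_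
  rintro _ ⟨q, rfl, hq⟩
  refine (q.realize_toSentence_iff).2 fun w hw => ?_
  obtain ⟨g, hg⟩ := exists_realize_termVal_eq hθ H w
  obtain rfl : (fun a => (g a).realize (termVal hθ H)) = w := funext hg
  rw [← sat_map_subst] at hw
  have hprem : θ (mk H) (mk H ⊔ mk (q.premise.map (Atom.subst g))) :=
    sup_mk_of_forall hθ fun c hc => (realize_termVal hθ H c).1 (hw c hc)
  have hsubst := hθ.apply (hO ⟨g, rfl⟩) hq
  rw [← mk_append, subst_mk, subst_mk, List.map_append, mk_append] at hsubst
  have hconcl := (realize_termVal hθ H _).2 (hθ.sup_trans hprem hsubst)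
  exact realize_subst.1 hconcl

end TermModel

theorem sup_of_entails_congTheory (hθ : IsCong O θ) (hO : substOps T₀ ⊆ O) {F G : List (Atom L)}
    (h : Entails (congTheory θ) F G) : θ (mk F) (mk F ⊔ mk G) := by
  have := termModel_models hθ F hO
  have hF : Sat (termVal hθ F) F := fun φ hφ => (realize_termVal hθ F φ).2
    (hθ.sup_of_le (mk_le_mk.2 fun _ _ hw => sat_singleton.2 (hw φ hφ)))
  exact sup_mk_of_forall hθ fun c hc =>
    (realize_termVal hθ F c).1 (h (Theory.ModelType.of _ (TermModel hθ F)) _ hF c hc)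

theorem entails_congTheory_of_sup {F : List (Atom L)} {c : Atom L}
    (h : θ (mk F) (mk F ⊔ mk [c])) : Entails (congTheory θ) F [c] := by
  obtain ⟨q, hq⟩ := QuasiIdentity.exists_premise_conclusion_equiv F c
  have hP : ∀ {T : L.Theory}, (mk q.premise : Conj T) = mk F :=
    mk_eq_mk_of_forall fun _ _ w => (hq w).1
  have hC : ∀ {T : L.Theory}, (mk [q.conclusion] : Conj T) = mk [c] :=
    mk_eq_mk_of_forall fun _ _ w => by simp only [sat_singleton, (hq w).2]
  have hmem : q.toSentence ∈ congTheory θ := ⟨q, rfl, by rwa [hP, hC]⟩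
  have := q.models_toSentence_iff.1 (Theory.models_sentence_of_mem hmem)
  rwa [← mk_le_mk, hP, hC, mk_le_mk] at this

theorem entails_congTheory_of_rel (hθ : IsCong O θ) {F G : List (Atom L)}
    (h : θ (mk F) (mk G)) : Entails (congTheory θ) F G := fun M w hF c hc =>
  sat_singleton.1 (entails_congTheory_of_sup
    (hθ.sup_of_rel h (mk_le_mk.2 fun _ _ hG => sat_singleton.2 (hG c hc))) M w hF)

theorem theoryCong_congTheory (hθ : IsCong O θ) (hO : substOps T₀ ⊆ O)
    (h : T₀ ⊆ congTheory θ) : theoryCong h = θ := by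
  refine funext₂ fun x y => propext ?_
  induction x using Quotient.ind with | _ F => ?_
  induction y using Quotient.ind with | _ G => ?_
  refine mk_eq_mk.trans ⟨fun hFG => ?_, fun hFG M w => ?_⟩
  · exact hθ.of_sup_of_sup (sup_of_entails_congTheory hθ hO fun M w => (hFG M w).1)
      (sup_of_entails_congTheory hθ hO fun M w => (hFG M w).2)
  · exact ⟨entails_congTheory_of_rel hθ hFG M w, entails_congTheory_of_rel hθ (hθ.symm hFG) M w⟩

theorem isQETheory_congTheory (hT₀ : ∀ σ ∈ T₀, IsQuasiIdentity σ) (hθ : IsCong O θ)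
    (hO : substOps T₀ ⊆ O) : IsQETheory T₀ (congTheory θ) := by
  refine ⟨subset_congTheory hT₀ hθ, fun σ ⟨q, hq, _⟩ => isQuasiIdentity_iff.2 ⟨q, hq⟩,
    fun σ hσ hmod => ?_⟩
  obtain ⟨q, rfl⟩ := isQuasiIdentity_iff.1 hσ
  exact ⟨q, rfl, sup_of_entails_congTheory hθ hO (q.models_toSentence_iff.1 hmod)⟩

def qeTheoryOrderIsoCong (hT₀ : ∀ σ ∈ T₀, IsQuasiIdentity σ) :
    {T : L.Theory // IsQETheory T₀ T} ≃o
      {θ : Conj T₀ → Conj T₀ → Prop // IsCong (substOps T₀) θ} :=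
  Equiv.toOrderIso
    { toFun T := ⟨theoryCong T.2.1, isCong_theoryCong T.2.1⟩
      invFun θ := ⟨congTheory θ.1, isQETheory_congTheory hT₀ θ.2 subset_rfl⟩
      left_inv T := Subtype.ext (congTheory_theoryCong T.2)
      right_inv θ := Subtype.ext (theoryCong_congTheory θ.2 subset_rfl _) }
    (fun _ _ h _ _ => theoryCong_mono _ _ h)
    (fun _ _ h _ ⟨q, hq, hθ⟩ => ⟨q, hq, h _ _ hθ⟩)

def pairSubst (t u : L.Term Var) : Var → L.Term Var := fun b => if b.down = 0 then t else u

def pseudoOneAtom : Atom L := eqAtom (Term.var (Sum.inl ⟨0⟩)) (Term.var (Sum.inl ⟨1⟩))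

theorem realize_subst_pseudoOneAtom {M : Type*} [L.Structure M] {t u : L.Term Var}
    {w : Var → M} :
    (pseudoOneAtom.subst (pairSubst t u)).1.Realize w ↔ t.realize w = u.realize w :=
  realize_subst.trans realize_eqAtom

theorem foldr_map_subst (φ : Atom L) (σs : List (Var → L.Term Var)) :
    ((σs.map Conj.subst).map fun f => f (mk [φ] : Conj T)).foldr (· ⊔ ·) ⊥ =
      mk (σs.map φ.subst) := by
  rw [mk_eq_foldr (σs.map φ.subst), List.map_map, List.map_map]
  rfl

theorem exists_pseudoOne (s : Conj T) {f : Conj T → Conj T} (hf : f ∈ substOps T) :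
    ∃ gs : List (Conj T → Conj T), gs ≠ [] ∧ (∀ g ∈ gs, g ∈ substOps T) ∧
      f s ⊔ (gs.map fun g => g (mk [pseudoOneAtom])).foldr (· ⊔ ·) ⊥ =
        s ⊔ (gs.map fun g => g (mk [pseudoOneAtom])).foldr (· ⊔ ·) ⊥ := by
  obtain ⟨g, rfl⟩ := hf
  induction s using Quotient.ind with | _ F => ?_
  -- `Term.var` only keeps the list nonempty when `F` has no variables.
  let σs := Term.var :: (vars F).map fun a => pairSubst (Term.var a) (g a)
  refine ⟨σs.map subst, List.cons_ne_nil _ _, List.forall_mem_map.2 fun σ _ => ⟨σ, rfl⟩, ?_⟩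
  rw [foldr_map_subst]
  refine mk_eq_mk_of_forall (F := F.map (Atom.subst g) ++ _) (G := F ++ _) fun _ _ w => ?_
  simp only [sat_append, sat_map_subst]
  refine and_congr_left fun hK => sat_congr_of_eqOn fun a ha => ?_
  exact (realize_subst_pseudoOneAtom.1
    (hK _ (List.mem_map_of_mem (List.mem_cons_of_mem _ (List.mem_map_of_mem ha))))).symm

end QuasiEquational

/-- Let `L'` be a complete lattice order-isomorphic to `QTh(T₀)`
for some first-order language and some set `T₀` of quasi-identities.  Then there
exist a join semilattice `S` with least element `0` and a monoid `M` of operators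
on `S` such that `L'` is order-isomorphic to `Con(S,∨,0,M)`, and moreover there
exists `k ∈ S` such that for every `s ∈ S` and `f ∈ M` there exist finitely many
`g₁, …, gₙ ∈ M` with `f(s) ∨ g₁(k) ∨ ⋯ ∨ gₙ(k) = s ∨ g₁(k) ∨ ⋯ ∨ gₙ(k)`. -/
theorem pseudoOne_of_qth (L' : Type w) [CompleteLattice L']
    (h : ∃ (L : FirstOrder.Language.{u, v}) (T₀ : L.Theory),
      (∀ σ ∈ T₀, IsQuasiIdentity σ) ∧
      Nonempty (L' ≃o {T : L.Theory // IsQETheory T₀ T})) :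
    Nonempty (PseudoOneRepresentation.{u, v, w} L') := by
  obtain ⟨L, T₀, hT₀, ⟨e⟩⟩ := h
  open QuasiEquational in
  exact ⟨{ S := Conj T₀
           M := substOps T₀
           op := fun _ => isOperator_of_mem_substOps
           idMem := id_mem_substOps
           compMem := fun _ hf _ hg => comp_mem_substOps hf hg
           iso := e.trans (qeTheoryOrderIsoCong hT₀)
           k := Conj.mk [pseudoOneAtom]
           pseudoOne := fun s _ hf => exists_pseudoOne s hf }⟩
end

section
/- There is no first-order language L and set T₀ of quasi-identities in L such that the lattice QTh(T₀) of quasi-equational theories extending T₀, ordered by inclusion, is order-isomorphic to the ordinal ω + 1, i.e., to the chain ℕ with a greatest element adjoined. -/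
open FirstOrder FirstOrder.Language

universe u v

/-!
The top of `QTh(T₀)` is the set of all quasi-identities, and in `ω + 1` it is the union of the
chain below it; by compactness that union is itself a quasi-equational theory, so every single
quasi-identity lies in a proper theory of the chain, and so does every proper theory enlarged by
one quasi-identity. In particular some proper theory `A` contains `∀ x y, x = y`, so all models
of `A` are one-element structures, described by which relations hold on their point. Writing
`ρ_R` (`diagRel R`) for `∀ x, R(x, …, x)`, pick `ρ_R ∉ A` and then `ρ_S` outside the proper
theory `F` generated by `A` and `ρ_R`. The theory generated by `A` and `ρ_R → ρ_S` is then
incomparable with `F`: lying below `F` would put `ρ_S` into `F`, lying above it would put `ρ_R`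
into `A`. This is impossible in a chain.
-/

namespace FirstOrder.Language

open BoundedFormula

variable {L : Language.{u, v}}

def quasiIdentities (L : Language.{u, v}) : L.Theory := {σ | IsQuasiIdentity σ}

def qeClosure (X : L.Theory) : L.Theory := {σ | IsQuasiIdentity σ ∧ X ⊨ᵇ σ}

def quasiIdentity {n : ℕ} (hyps : List (L.BoundedFormula Empty n))
    (concl : L.BoundedFormula Empty n) : L.Sentence :=
  alls ((hyps.foldr (· ⊓ ·) ⊤).imp concl)

def allEqual (L : Language.{u, v}) : L.Sentence :=
  quasiIdentity ([] : List (L.BoundedFormula Empty 2))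
    ((var (Sum.inr 0)).bdEqual (var (Sum.inr 1)))

def diagAtom {k : ℕ} (R : L.Relations k) : L.BoundedFormula Empty 1 :=
  R.boundedFormula fun _ => var (Sum.inr 0)

def diagRel {k : ℕ} (R : L.Relations k) : L.Sentence :=
  quasiIdentity [] (diagAtom R)

def diagRelImp {k l : ℕ} (R : L.Relations k) (S : L.Relations l) : L.Sentence :=
  quasiIdentity [diagAtom R] (diagAtom S)

section Closure

variable {T₀ T X A : L.Theory} {σ : L.Sentence}

theorem isQETheory_quasiIdentities (hT₀ : T₀ ⊆ L.quasiIdentities) :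
    IsQETheory T₀ L.quasiIdentities :=
  ⟨hT₀, fun _ h => h, fun _ h _ => h⟩

theorem subset_qeClosure (hX : X ⊆ L.quasiIdentities) : X ⊆ qeClosure X :=
  fun _ hσ => ⟨hX hσ, Theory.models_sentence_of_mem hσ⟩

theorem isQETheory_qeClosure (h₀ : T₀ ⊆ X) (hX : X ⊆ L.quasiIdentities) :
    IsQETheory T₀ (qeClosure X) :=
  ⟨h₀.trans (subset_qeClosure hX), fun _ hσ => hσ.1,
    fun _ hσ h => ⟨hσ, Theory.models_of_models_theory (fun _ hψ => hψ.2) h⟩⟩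

theorem _root_.IsQETheory.subset_quasiIdentities (hT : IsQETheory T₀ T) :
    T ⊆ L.quasiIdentities :=
  hT.2.1

theorem _root_.IsQETheory.mem_of_models (hT : IsQETheory T₀ T) (hXT : X ⊆ T)
    (hσ : IsQuasiIdentity σ) (h : X ⊨ᵇ σ) : σ ∈ T :=
  hT.2.2 σ hσ <|
    Theory.models_of_models_theory (fun _ hψ => Theory.models_sentence_of_mem (hXT hψ)) h

theorem _root_.IsQETheory.qeClosure_subset (hT : IsQETheory T₀ T) (hXT : X ⊆ T) :
    qeClosure X ⊆ T :=
  fun _ hσ => hT.mem_of_models hXT hσ.1 hσ.2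

theorem _root_.IsQETheory.qeClosure_eq (hT : IsQETheory T₀ T) : qeClosure T = T :=
  (hT.qeClosure_subset subset_rfl).antisymm (subset_qeClosure hT.subset_quasiIdentities)

theorem _root_.IsQETheory.insert_subset_qeClosure (hA : IsQETheory T₀ A)
    (hσ : IsQuasiIdentity σ) : insert σ A ⊆ qeClosure (insert σ A) :=
  subset_qeClosure (Set.insert_subset hσ hA.subset_quasiIdentities)

theorem _root_.IsQETheory.qeClosure_insert (hA : IsQETheory T₀ A) (hσ : IsQuasiIdentity σ) :
    IsQETheory T₀ (qeClosure (insert σ A)) :=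
  isQETheory_qeClosure (hA.1.trans (Set.subset_insert σ A))
    (Set.insert_subset hσ hA.subset_quasiIdentities)

theorem isQETheory_iUnion {ι : Type*} [Nonempty ι] {T : ι → L.Theory}
    (hdir : Directed (· ⊆ ·) T) (hT : ∀ i, IsQETheory T₀ (T i)) :
    IsQETheory T₀ (⋃ i, T i) := by
  refine ⟨(hT (Classical.arbitrary ι)).1.trans (Set.subset_iUnion T _),
    Set.iUnion_subset fun i => (hT i).subset_quasiIdentities, fun σ hσ h => ?_⟩
  obtain ⟨s, hs, hsσ⟩ := Theory.models_iff_finset_models.1 h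
  obtain ⟨i, hi⟩ := hdir.exists_mem_subset_of_finset_subset_biUnion hs
  exact Set.mem_iUnion_of_mem i ((hT i).mem_of_models hi hσ hsσ)

end Closure

section OneElementModels

variable {M : Type*} [L.Structure M]

theorem isQuasiIdentity_quasiIdentity {n : ℕ} {hyps : List (L.BoundedFormula Empty n)}
    {concl : L.BoundedFormula Empty n} (hh : ∀ φ ∈ hyps, φ.IsAtomic) (hc : concl.IsAtomic) :
    IsQuasiIdentity (quasiIdentity hyps concl) :=
  ⟨n, hyps, concl, hh, hc, rfl⟩

theorem realize_quasiIdentity {n : ℕ} {hyps : List (L.BoundedFormula Empty n)}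
    {concl : L.BoundedFormula Empty n} :
    M ⊨ quasiIdentity hyps concl ↔
      ∀ xs : Fin n → M, (∀ φ ∈ hyps, φ.Realize default xs) → concl.Realize default xs := by
  rw [quasiIdentity, Sentence.Realize, realize_alls]
  simp only [realize_imp, realize_foldr_inf]

theorem isQuasiIdentity_allEqual : IsQuasiIdentity (allEqual L) :=
  isQuasiIdentity_quasiIdentity (by simp) (.equal _ _)

theorem isQuasiIdentity_diagRel {k : ℕ} (R : L.Relations k) : IsQuasiIdentity (diagRel R) :=
  isQuasiIdentity_quasiIdentity (by simp) (.rel _ _)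

theorem isQuasiIdentity_diagRelImp {k l : ℕ} (R : L.Relations k) (S : L.Relations l) :
    IsQuasiIdentity (diagRelImp R S) :=
  isQuasiIdentity_quasiIdentity (by simpa [diagAtom] using .rel _ _) (.rel _ _)

theorem realize_allEqual : M ⊨ allEqual L ↔ Subsingleton M := by
  simp only [allEqual, realize_quasiIdentity, List.not_mem_nil, IsEmpty.forall_iff,
    implies_true, realize_bdEqual, Term.realize_var, Sum.elim_inr, forall_const, subsingleton_iff]
  exact ⟨fun h x y => h ![x, y], fun h xs => h _ _⟩

theorem realize_diagRel {k : ℕ} {R : L.Relations k} :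
    M ⊨ diagRel R ↔ ∀ x : M, Structure.RelMap R fun _ => x := by
  simp only [diagRel, diagAtom, realize_quasiIdentity, List.not_mem_nil, IsEmpty.forall_iff,
    implies_true, realize_rel, Term.realize_var, Sum.elim_inr, forall_const]
  exact ⟨fun h x => h fun _ => x, fun h xs => h (xs 0)⟩

theorem realize_diagRelImp {k l : ℕ} {R : L.Relations k} {S : L.Relations l} :
    M ⊨ diagRelImp R S ↔
      ∀ x : M, Structure.RelMap R (fun _ => x) → Structure.RelMap S fun _ => x := by
  simp only [diagRelImp, diagAtom, realize_quasiIdentity, List.mem_singleton, forall_eq,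
    realize_rel, Term.realize_var, Sum.elim_inr]
  exact ⟨fun h x => h fun _ => x, fun h xs => h (xs 0)⟩

theorem realize_diagRelImp_of_not_realize_diagRel [Subsingleton M] {k l : ℕ}
    {R : L.Relations k} (S : L.Relations l) (h : ¬ M ⊨ diagRel R) : M ⊨ diagRelImp R S :=
  realize_diagRelImp.2 fun x hx =>
    absurd (realize_diagRel.2 fun y => Subsingleton.elim x y ▸ hx) h

/-- On a single point every atomic formula is decided by the relation symbols alone. -/
theorem realize_of_isQuasiIdentity [Nonempty M] [Subsingleton M]
    (hρ : ∀ (k : ℕ) (R : L.Relations k), M ⊨ diagRel R) {σ : L.Sentence}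
    (hσ : IsQuasiIdentity σ) : M ⊨ σ := by
  obtain ⟨n, hyps, concl, -, hc, rfl⟩ := hσ
  refine realize_quasiIdentity.2 fun xs _ => ?_
  cases hc with
  | equal t₁ t₂ => exact (realize_bdEqual _ _).2 (Subsingleton.elim _ _)
  | rel R ts =>
    rw [realize_rel]
    convert realize_diagRel.1 (hρ _ R) (Classical.arbitrary M) using 2

end OneElementModels

section OneElementTheories

variable {T₀ T A : L.Theory}

theorem _root_.IsQETheory.exists_diagRel_not_mem (hT : IsQETheory T₀ T) (hδ : allEqual L ∈ T)
    (hne : T ≠ L.quasiIdentities) : ∃ (k : ℕ) (R : L.Relations k), diagRel R ∉ T := by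
  by_contra! hρ
  refine hne (hT.subset_quasiIdentities.antisymm fun σ hσ =>
    hT.2.2 σ hσ (Theory.models_sentence_iff.2 fun M => ?_))
  have : Subsingleton M := realize_allEqual.1 (Theory.realize_sentence_of_mem T hδ)
  exact realize_of_isQuasiIdentity (fun k R => Theory.realize_sentence_of_mem T (hρ k R)) hσ

theorem diagRel_mem_of_diagRelImp_mem {X : L.Theory} {k l : ℕ} {R : L.Relations k}
    {S : L.Relations l} (h : diagRelImp R S ∈ qeClosure (insert (diagRel R) X)) :
    diagRel S ∈ qeClosure (insert (diagRel R) X) := by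
  refine ⟨isQuasiIdentity_diagRel S, Theory.models_sentence_iff.2 fun M => ?_⟩
  have hR := (Theory.model_insert_iff.1 M.is_model).1
  exact realize_diagRel.2 fun x =>
    realize_diagRelImp.1 (h.2.realize_sentence M) x (realize_diagRel.1 hR x)

/-- A one-element model of `A` refuting `ρ_R` satisfies `ρ_R → ρ_S` vacuously. -/
theorem diagRel_not_mem_qeClosure_insert_diagRelImp (hδ : allEqual L ∈ A) {k l : ℕ}
    {R : L.Relations k} (hR : ¬ A ⊨ᵇ diagRel R) (S : L.Relations l) :
    diagRel R ∉ qeClosure (insert (diagRelImp R S) A) := by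
  intro h
  refine hR (Theory.models_sentence_iff.2 fun M => ?_)
  have : Subsingleton M := realize_allEqual.1 (Theory.realize_sentence_of_mem A hδ)
  by_contra hMR
  have : (M : Type _) ⊨ insert (diagRelImp R S) A :=
    Theory.model_insert_iff.2 ⟨realize_diagRelImp_of_not_realize_diagRel S hMR, M.is_model⟩
  exact hMR (h.2.realize_sentence M)

theorem exists_qeClosure_insert_eq_quasiIdentities
    (hchain : IsChain (· ⊆ ·) {T : L.Theory | IsQETheory T₀ T}) (hA : IsQETheory T₀ A)
    (hδ : allEqual L ∈ A) :
    ∃ σ, IsQuasiIdentity σ ∧ qeClosure (insert σ A) = L.quasiIdentities := by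
  by_contra! hproper
  have hA_ne : A ≠ L.quasiIdentities := by
    simpa [Set.insert_eq_of_mem hδ, hA.qeClosure_eq] using hproper _ isQuasiIdentity_allEqual
  obtain ⟨k, R, hR⟩ := hA.exists_diagRel_not_mem hδ hA_ne
  have hF := hA.qeClosure_insert (isQuasiIdentity_diagRel R)
  have hFA := hA.insert_subset_qeClosure (isQuasiIdentity_diagRel R)
  obtain ⟨l, S, hS⟩ := hF.exists_diagRel_not_mem (hFA (Set.mem_insert_of_mem _ hδ))
    (hproper _ (isQuasiIdentity_diagRel R))
  have hY := hA.qeClosure_insert (isQuasiIdentity_diagRelImp R S)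
  have hYA := hA.insert_subset_qeClosure (isQuasiIdentity_diagRelImp R S)
  rcases hchain.total hY hF with hYF | hFY
  · exact hS (diagRel_mem_of_diagRelImp_mem (hYF (hYA (Set.mem_insert _ _))))
  · exact diagRel_not_mem_qeClosure_insert_diagRelImp hδ
      (fun h => hR (hA.2.2 _ (isQuasiIdentity_diagRel R) h)) S (hFY (hFA (Set.mem_insert _ _)))

end OneElementTheories

section OrderIso

variable {T₀ : L.Theory}

theorem isChain_of_orderIso {α : Type*} [LinearOrder α]
    (f : {T : L.Theory // IsQETheory T₀ T} ≃o α) :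
    IsChain (· ⊆ ·) {T : L.Theory | IsQETheory T₀ T} :=
  fun X hX Y hY _ => (le_total (f ⟨X, hX⟩) (f ⟨Y, hY⟩)).imp f.le_iff_le.1 f.le_iff_le.1

theorem orderIso_eq_top_iff {α : Type*} [PartialOrder α] [OrderTop α]
    (f : {T : L.Theory // IsQETheory T₀ T} ≃o α) (hT₀ : T₀ ⊆ L.quasiIdentities)
    {X : {T : L.Theory // IsQETheory T₀ T}} : f X = ⊤ ↔ X.1 = L.quasiIdentities := by
  have hQI := isQETheory_quasiIdentities hT₀
  constructor
  · intro h
    have : (⟨_, hQI⟩ : {T : L.Theory // IsQETheory T₀ T}) ≤ X :=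
      f.le_iff_le.1 (h ▸ le_top)
    exact X.2.subset_quasiIdentities.antisymm this
  · intro h
    exact top_unique (f.symm_apply_le.1 ((f.symm ⊤).2.subset_quasiIdentities.trans h.ge))

variable (f : {T : L.Theory // IsQETheory T₀ T} ≃o WithTop ℕ)

theorem monotone_orderIso_symm_coe : Monotone fun n : ℕ => (f.symm n).1 :=
  fun _ _ h => f.symm.monotone (WithTop.coe_le_coe.2 h)

theorem orderIso_symm_coe_ne (hT₀ : T₀ ⊆ L.quasiIdentities) (n : ℕ) :
    (f.symm n).1 ≠ L.quasiIdentities := fun h =>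
  WithTop.coe_ne_top (f.apply_symm_apply (n : WithTop ℕ) ▸ (orderIso_eq_top_iff f hT₀).2 h)

/-- The top of `ω + 1` is the join of the chain below it, and the union of that chain is a
quasi-equational theory by compactness. -/
theorem exists_mem_orderIso_symm_coe (hT₀ : T₀ ⊆ L.quasiIdentities) {σ : L.Sentence}
    (hσ : IsQuasiIdentity σ) :
    ∃ n : ℕ, σ ∈ (f.symm n).1 := by
  have hU := isQETheory_iUnion (monotone_orderIso_symm_coe f).directed_le fun n => (f.symm n).2
  have htop : f ⟨_, hU⟩ = ⊤ :=
    WithTop.eq_top_iff_forall_ge.2 fun n =>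
      f.symm_apply_le.1
        (show f.symm n ≤ ⟨_, hU⟩ from Set.subset_iUnion (fun i : ℕ => (f.symm i).1) n)
  have hUeq : (⋃ n : ℕ, (f.symm n).1) = L.quasiIdentities := (orderIso_eq_top_iff f hT₀).1 htop
  exact Set.mem_iUnion.1 (hUeq ▸ hσ)

end OrderIso

end FirstOrder.Language

/-- There is no first-order language `L` and set `T₀` of
quasi-identities in `L` such that the lattice `QTh(T₀)` of quasi-equational
theories extending `T₀`, ordered by inclusion, is order-isomorphic to the
ordinal `ω + 1`, i.e. to the chain `ℕ` with a greatest element adjoined. -/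
theorem no_qth_omega_add_one :
    ¬ ∃ (L : FirstOrder.Language.{u, v}) (T₀ : L.Theory),
      (∀ σ ∈ T₀, IsQuasiIdentity σ) ∧
      Nonempty ({T : L.Theory // IsQETheory T₀ T} ≃o WithTop ℕ) := by
  rintro ⟨L, T₀, hT₀, ⟨f⟩⟩
  obtain ⟨N, hδ⟩ := exists_mem_orderIso_symm_coe f hT₀ isQuasiIdentity_allEqual
  obtain ⟨σ, hσ, htop⟩ :=
    exists_qeClosure_insert_eq_quasiIdentities (isChain_of_orderIso f) (f.symm N).2 hδ
  obtain ⟨m, hm⟩ := exists_mem_orderIso_symm_coe f hT₀ hσ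
  have hmono := monotone_orderIso_symm_coe f
  have hsub : qeClosure (insert σ (f.symm N).1) ⊆ (f.symm ↑(max N m)).1 :=
    (f.symm _).2.qeClosure_subset
      (Set.insert_subset (hmono (le_max_right N m) hm) (hmono (le_max_left N m)))
  exact orderIso_symm_coe_ne f hT₀ (max N m)
    ((f.symm _).2.subset_quasiIdentities.antisymm (htop ▸ hsub))
end
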